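/- arXiv:1802.00646 — 2 statements merged into one kernel-verified Lean document; each statement's English description precedes it below -/
import Mathlib

section
/- For the generalized amplitude damping parameters, the function f(p, s) = √(p(1−p))·(1 − e^{−2s}) + √(1 − p + p·e^{−2s})·√(p + (1−p)·e^{−2s}) satisfies e^{−s} ≤ f(p, s) ≤ 1 for all p ∈ [0, 1/2] and s ≥ 0. -/
/-- The function `f(p, s)` appearing in the generalized amplitude damping
channel bounds. -/
noncomputable def gadF (p s : ℝ) : ℝ :=
  Real.sqrt (p * (1 - p)) * (1 - Real.exp (-2 * s)) +
    Real.sqrt (1 - p + p * Real.exp (-2 * s)) *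
      Real.sqrt (p + (1 - p) * Real.exp (-2 * s))

/-- `e^{-s} ≤ f(p, s) ≤ 1` for all `p ∈ [0, 1/2]` and `s ≥ 0`. -/
theorem gadF_bounds (p s : ℝ) (hp0 : 0 ≤ p) (hp : p ≤ 1 / 2) (hs : 0 ≤ s) :
    Real.exp (-s) ≤ gadF p s ∧ gadF p s ≤ 1 := by
  set E := Real.exp (-2 * s) with hE
  have hE0 : 0 < E := Real.exp_pos _
  have hE1 : E ≤ 1 := by
    rw [hE]
    exact Real.exp_le_one_iff.mpr (by linarith)
  have hp1 : p ≤ 1 := by linarith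
  have hx : 0 ≤ 1 - p + p * E := by nlinarith
  have hy : 0 ≤ p + (1 - p) * E := by nlinarith
  have ha0 : 0 ≤ p * (1 - p) := by nlinarith
  have hmul : Real.sqrt (1 - p + p * E) * Real.sqrt (p + (1 - p) * E) =
      Real.sqrt ((1 - p + p * E) * (p + (1 - p) * E)) :=
    (Real.sqrt_mul hx _).symm
  have hsa : Real.sqrt (p * (1 - p)) ≤ 1 / 2 := by
    rw [show (1:ℝ)/2 = Real.sqrt (1/4) by
      rw [show (1:ℝ)/4 = (1/2)^2 by norm_num, Real.sqrt_sq (by norm_num)]]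
    exact Real.sqrt_le_sqrt (by nlinarith)
  have hes : Real.exp (-s) = Real.sqrt E := by
    rw [hE, show (-2:ℝ) * s = -s + -s by ring, Real.exp_add,
      Real.sqrt_mul_self (Real.exp_nonneg _)]
  constructor
  · -- lower bound
    rw [gadF, ← hE, hmul, hes]
    have h1 : E ≤ (1 - p + p * E) * (p + (1 - p) * E) := by nlinarith [sq_nonneg (1 - E)]
    have h2 : Real.sqrt E ≤ Real.sqrt ((1 - p + p * E) * (p + (1 - p) * E)) :=
      Real.sqrt_le_sqrt h1
    nlinarith [Real.sqrt_nonneg (p * (1 - p))]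
  · -- upper bound
    rw [gadF, ← hE, hmul]
    have hxy : Real.sqrt ((1 - p + p * E) * (p + (1 - p) * E)) ≤ (1 + E) / 2 := by
      nlinarith [sq_nonneg (Real.sqrt (1 - p + p * E) - Real.sqrt (p + (1 - p) * E)),
        Real.sq_sqrt hx, Real.sq_sqrt hy, hmul,
        Real.sqrt_nonneg ((1 - p + p * E) * (p + (1 - p) * E))]
    nlinarith [Real.sqrt_nonneg (p * (1 - p))]
end

section
/- For real λ₃ and t₃ with |t₃| + |λ₃| < 1, the rescaled parameter λ̃₃ = 4λ₃ / (√((1+λ₃)² − t₃²) + √((1−λ₃)² − t₃²))² satisfies |λ̃₃| ≤ 1. -/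
/-- for real `λ₃, t₃` with `|t₃| + |λ₃| < 1`, the rescaled
parameter `λ̃₃ = 4λ₃ / (√((1+λ₃)² − t₃²) + √((1−λ₃)² − t₃²))²`
satisfies `|λ̃₃| ≤ 1`. -/
theorem rescaled_lambda3_bound (lam₃ t₃ : ℝ) (h : |t₃| + |lam₃| < 1) :
    |4 * lam₃ / (Real.sqrt ((1 + lam₃) ^ 2 - t₃ ^ 2) +
        Real.sqrt ((1 - lam₃) ^ 2 - t₃ ^ 2)) ^ 2| ≤ 1 := by
  have hl := abs_nonneg lam₃
  have htn := abs_nonneg t₃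
  have hsl := sq_abs lam₃
  have hst := sq_abs t₃
  have hla := le_abs_self lam₃
  have hna := neg_abs_le lam₃
  have hkey : (1 - |lam₃|) ^ 2 - t₃ ^ 2 > 0 := by nlinarith
  have ha : (1 + lam₃) ^ 2 - t₃ ^ 2 > 0 := by nlinarith
  have hb : (1 - lam₃) ^ 2 - t₃ ^ 2 > 0 := by nlinarith
  set a := (1 + lam₃) ^ 2 - t₃ ^ 2 with hA
  set b := (1 - lam₃) ^ 2 - t₃ ^ 2 with hB
  have hsa : Real.sqrt a > 0 := Real.sqrt_pos.mpr ha
  have hsb : Real.sqrt b > 0 := Real.sqrt_pos.mpr hb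
  have hsa2 : Real.sqrt a ^ 2 = a := Real.sq_sqrt ha.le
  have hsb2 : Real.sqrt b ^ 2 = b := Real.sq_sqrt hb.le
  have hden : (Real.sqrt a + Real.sqrt b) ^ 2 > 0 := by positivity
  rw [abs_div, abs_of_nonneg hden.le, div_le_one hden]
  have hnum : |4 * lam₃| = 4 * |lam₃| := by
    rw [abs_mul]; norm_num
  rw [hnum]
  have hsum : (Real.sqrt a + Real.sqrt b) ^ 2 ≥ a + b := by
    nlinarith [mul_pos hsa hsb]
  have hab : a + b ≥ 4 * |lam₃| := by
    rw [hA, hB]; nlinarith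
  linarith
end
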